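/- Define G₂ = ℤ[ω₂] ∪ (ℤ[ω₂] + ω₂/2), G₇ = ℤ[ω₇] ∪ (ℤ[ω₇] + ω₇/2), and G₁₁ = ℤ[ω₁₁] ∪ (ℤ[ω₁₁] + ω₁₁/3) ∪ (ℤ[ω₁₁] + ω₁₁/2) ∪ (ℤ[ω₁₁] + 2ω₁₁/3). For each d ∈ {2,7,11}, the subgraph of the Farey graph E_d induced on the vertex set G_d is connected: any two elements of G_d are joined by a walk in E_d all of whose vertices belong to G_d. -/

import Mathlib

/-- `ω_d`: the generator of the ring of integers of `ℚ(√(-d))`. -/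
noncomputable def omegaD (d : ℕ) : ℂ :=
  if d % 4 = 3 then (1 + Complex.I * Real.sqrt d) / 2 else Complex.I * Real.sqrt d

/-- The ring of integers `ℤ[ω_d]` of `ℚ(√(-d))`, as a subset of `ℂ`. -/
def ringInt (d : ℕ) : Set ℂ := {z | ∃ a b : ℤ, z = (a : ℂ) + (b : ℂ) * omegaD d}

/-- `p` and `q` are coprime in `ℤ[ω_d]`. -/
def CoprimeIn (d : ℕ) (p q : ℂ) : Prop :=
  ∃ u v : ℂ, u ∈ ringInt d ∧ v ∈ ringInt d ∧ u * p + v * q = 1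

/-- `x` is an element of the field `ℚ(√(-d)) ⊆ ℂ`. -/
def inK (d : ℕ) (x : ℂ) : Prop :=
  ∃ p q : ℂ, p ∈ ringInt d ∧ q ∈ ringInt d ∧ q ≠ 0 ∧ x = p / q

/-- The point `p/q` of `ℂ ∪ {∞}`, with `p/0 = ∞`. -/
noncomputable def divC (p q : ℂ) : OnePoint ℂ :=
  if q = 0 then OnePoint.infty else ((p / q : ℂ) : OnePoint ℂ)

/-- Two points of `ℚ(√(-d)) ∪ {∞}` are Farey neighbours (joined by an edge of
the Farey graph `E_d`) if they have coprime representations `p₁/q₁`, `p₂/q₂`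
with `|p₁q₂ − p₂q₁| = 1`. -/
def FareyAdj (d : ℕ) (x y : OnePoint ℂ) : Prop :=
  ∃ p₁ q₁ p₂ q₂ : ℂ, p₁ ∈ ringInt d ∧ q₁ ∈ ringInt d ∧ p₂ ∈ ringInt d ∧ q₂ ∈ ringInt d ∧
    CoprimeIn d p₁ q₁ ∧ CoprimeIn d p₂ q₂ ∧ x = divC p₁ q₁ ∧ y = divC p₂ q₂ ∧
    ‖p₁ * q₂ - p₂ * q₁‖ = 1

/-- `f 0 → f 1 → ⋯ → f n` is a walk (of length `n`) in the Farey graph `E_d`. -/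
def IsWalk (d n : ℕ) (f : ℕ → OnePoint ℂ) : Prop := ∀ k, k < n → FareyAdj d (f k) (f (k + 1))

/-- `f 0 → ⋯ → f n` is a geodesic path in `E_d`: a walk of minimal length
among all walks with the same endpoints. -/
def IsGeodesicWalk (d n : ℕ) (f : ℕ → OnePoint ℂ) : Prop :=
  IsWalk d n f ∧ ∀ (m : ℕ) (g : ℕ → OnePoint ℂ), IsWalk d m g → g 0 = f 0 → g m = f n → n ≤ m

/-- Numerators of the convergents of `[a₁, a₂, …]` (`a 0` is unused):
`p₀ = 0`, `p₁ = 1`, `p_k = a_k p_{k−1} + p_{k−2}`. -/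
noncomputable def cfP (a : ℕ → ℂ) : ℕ → ℂ
  | 0 => 0
  | 1 => 1
  | (k + 2) => a (k + 2) * cfP a (k + 1) + cfP a k

/-- Denominators of the convergents of `[a₁, a₂, …]`:
`q₀ = 1`, `q₁ = a₁`, `q_k = a_k q_{k−1} + q_{k−2}`. -/
noncomputable def cfQ (a : ℕ → ℂ) : ℕ → ℂ
  | 0 => 1
  | 1 => a 1
  | (k + 2) => a (k + 2) * cfQ a (k + 1) + cfQ a k

/-- The walk `∞ → p₀/q₀ = 0 → p₁/q₁ → ⋯` along the convergents of `[a₁, a₂, …]`. -/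
noncomputable def cfWalk (a : ℕ → ℂ) : ℕ → OnePoint ℂ :=
  fun k => if k = 0 then OnePoint.infty else divC (cfP a (k - 1)) (cfQ a (k - 1))

/-- The sets `G_d` of Statement 3:
`G₂ = ℤ[ω₂] ∪ (ℤ[ω₂] + ω₂/2)`, `G₇ = ℤ[ω₇] ∪ (ℤ[ω₇] + ω₇/2)`,
`G₁₁ = ℤ[ω₁₁] ∪ (ℤ[ω₁₁] + ω₁₁/3) ∪ (ℤ[ω₁₁] + ω₁₁/2) ∪ (ℤ[ω₁₁] + 2ω₁₁/3)`. -/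
def Gset (d : ℕ) : Set ℂ :=
  if d = 11 then
    {z | z ∈ ringInt 11 ∨ z - omegaD 11 / 3 ∈ ringInt 11 ∨ z - omegaD 11 / 2 ∈ ringInt 11 ∨
      z - 2 * omegaD 11 / 3 ∈ ringInt 11}
  else {z | z ∈ ringInt d ∨ z - omegaD d / 2 ∈ ringInt d}

/-!
Translating by `t ∈ ℤ[ω_d]` acts on `ℚ(√(-d)) ∪ {∞}` through the unimodular matrix
`[[1, t], [0, 1]]`, so it preserves Farey adjacency, and it preserves `G_d`. Hence the points of
`ℤ[ω_d]` joined to `0` inside `G_d` form an additive group. It contains `1` (as `0 ~ 1`) and `ω`: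
writing `ω̄` for the conjugate, `N(ω) = ω ω̄` is `2` for `d = 2, 7`, where `ω/2 = 1/ω̄` gives the
path `0 ~ ω/2 ~ ω`, and `3` for `d = 11`, where `ω/3 = 1/ω̄`, `2ω/3 = 2/ω̄` give the path
`0 ~ ω/3 ~ ω/2 ~ 2ω/3 ~ ω`. So all of `ℤ[ω_d]` is joined to `0`, and then so is every coset
`c + ℤ[ω_d] ⊆ G_d`, since its offset `c` lies on one of these paths.
-/

section RingOfIntegers

variable {d : ℕ}

lemma omegaD_sq_of_eq_four_mul_add_three {m : ℕ} (hd : d = 4 * m + 3) :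
    omegaD d ^ 2 = omegaD d - (m + 1) := by
  have hs : (Complex.I * Real.sqrt d) ^ 2 = -d := by
    rw [mul_pow, Complex.I_sq, ← Complex.ofReal_pow, Real.sq_sqrt (Nat.cast_nonneg _)]
    push_cast; ring
  have hd' : (d : ℂ) = 4 * m + 3 := by exact_mod_cast hd
  rw [omegaD, if_pos (by omega)]
  linear_combination hs / 4 - hd' / 4

lemma omegaD_sq_of_mod_four_ne_three (hd : d % 4 ≠ 3) : omegaD d ^ 2 = -d := by
  rw [omegaD, if_neg hd, mul_pow, Complex.I_sq, ← Complex.ofReal_pow,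
    Real.sq_sqrt (Nat.cast_nonneg _)]
  push_cast; ring

lemma exists_omegaD_sq_eq : ∃ e f : ℤ, omegaD d ^ 2 = e + f * omegaD d := by
  by_cases hd : d % 4 = 3
  · obtain ⟨m, hm⟩ : ∃ m, d = 4 * m + 3 := ⟨d / 4, by omega⟩
    exact ⟨-(m + 1), 1, by rw [omegaD_sq_of_eq_four_mul_add_three hm]; push_cast; ring⟩
  · exact ⟨-d, 0, by rw [omegaD_sq_of_mod_four_ne_three hd]; push_cast; ring⟩

variable (d) in
def ringIntSubring : Subring ℂ where
  carrier := ringInt d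
  mul_mem' := by
    rintro _ _ ⟨a, b, rfl⟩ ⟨c, e, rfl⟩
    obtain ⟨e', f', h⟩ := exists_omegaD_sq_eq (d := d)
    exact ⟨a * c + b * e * e', a * e + b * c + b * e * f', by
      push_cast; linear_combination (b : ℂ) * e * h⟩
  one_mem' := ⟨1, 0, by simp⟩
  add_mem' := by
    rintro _ _ ⟨a, b, rfl⟩ ⟨c, e, rfl⟩
    exact ⟨a + c, b + e, by push_cast; ring⟩
  zero_mem' := ⟨0, 0, by simp⟩
  neg_mem' := by
    rintro _ ⟨a, b, rfl⟩
    exact ⟨-a, -b, by push_cast; ring⟩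

lemma omegaD_mem_ringInt : omegaD d ∈ ringInt d := ⟨0, 1, by simp⟩

lemma two_mem_ringInt : (2 : ℂ) ∈ ringInt d := ofNat_mem (ringIntSubring d) 2

end RingOfIntegers

section FareyGraph

variable {d : ℕ}

lemma divC_eq_coe {p q x : ℂ} : divC p q = (x : OnePoint ℂ) ↔ q ≠ 0 ∧ p = x * q := by
  unfold divC
  split_ifs with hq
  · simp [hq]
  · rw [OnePoint.coe_eq_coe, div_eq_iff hq]
    exact ⟨fun h => ⟨hq, h⟩, And.right⟩

lemma coprimeIn_one_left (q : ℂ) : CoprimeIn d 1 q :=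
  ⟨1, 0, (ringIntSubring d).one_mem, (ringIntSubring d).zero_mem, by ring⟩

lemma coprimeIn_one_right (p : ℂ) : CoprimeIn d p 1 :=
  ⟨0, 1, (ringIntSubring d).zero_mem, (ringIntSubring d).one_mem, by ring⟩

lemma fareyAdj_coe_of {x y p₁ q₁ p₂ q₂ : ℂ} (hp₁ : p₁ ∈ ringInt d) (hq₁ : q₁ ∈ ringInt d)
    (hp₂ : p₂ ∈ ringInt d) (hq₂ : q₂ ∈ ringInt d) (hc₁ : CoprimeIn d p₁ q₁)
    (hc₂ : CoprimeIn d p₂ q₂) (hq₁₀ : q₁ ≠ 0) (hq₂₀ : q₂ ≠ 0) (hx : p₁ = x * q₁)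
    (hy : p₂ = y * q₂) (hdet : p₁ * q₂ - p₂ * q₁ = -1) :
    FareyAdj d x y :=
  ⟨p₁, q₁, p₂, q₂, hp₁, hq₁, hp₂, hq₂, hc₁, hc₂, (divC_eq_coe.2 ⟨hq₁₀, hx⟩).symm,
    (divC_eq_coe.2 ⟨hq₂₀, hy⟩).symm, by simp [hdet]⟩

lemma FareyAdj.symm {a b : OnePoint ℂ} (h : FareyAdj d a b) : FareyAdj d b a := by
  obtain ⟨p₁, q₁, p₂, q₂, hp₁, hq₁, hp₂, hq₂, hc₁, hc₂, ha, hb, hdet⟩ := h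
  refine ⟨p₂, q₂, p₁, q₁, hp₂, hq₂, hp₁, hq₁, hc₂, hc₁, hb, ha, ?_⟩
  rw [← norm_neg, neg_sub, hdet]

lemma FareyAdj.ne {a b : OnePoint ℂ} (h : FareyAdj d a b) : a ≠ b := by
  rintro rfl
  obtain ⟨p₁, q₁, p₂, q₂, -, -, -, -, -, -, h₁, h₂, hdet⟩ := h
  have hcross : p₁ * q₂ - p₂ * q₁ = 0 := by
    unfold divC at h₁ h₂
    split_ifs at h₁ h₂ with hq₁ hq₂ hq₂
    · simp [hq₁, hq₂]
    · exact absurd (h₁.symm.trans h₂) (OnePoint.infty_ne_coe _)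
    · exact absurd (h₁.symm.trans h₂) (OnePoint.coe_ne_infty _)
    · have h := OnePoint.coe_eq_coe.1 (h₁.symm.trans h₂)
      rw [div_eq_div_iff hq₁ hq₂] at h
      exact sub_eq_zero.2 h
  simp [hcross] at hdet

lemma FareyAdj.add_right {x y t : ℂ} (ht : t ∈ ringInt d) (h : FareyAdj d x y) :
    FareyAdj d ↑(x + t) ↑(y + t) := by
  obtain ⟨p₁, q₁, p₂, q₂, hp₁, hq₁, hp₂, hq₂, ⟨u₁, v₁, hu₁, hv₁, hb₁⟩, ⟨u₂, v₂, hu₂, hv₂, hb₂⟩,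
    hx, hy, hdet⟩ := h
  obtain ⟨hq₁₀, rfl⟩ := divC_eq_coe.1 hx.symm
  obtain ⟨hq₂₀, rfl⟩ := divC_eq_coe.1 hy.symm
  set R := ringIntSubring d
  refine ⟨x * q₁ + t * q₁, q₁, y * q₂ + t * q₂, q₂, R.add_mem hp₁ (R.mul_mem ht hq₁), hq₁,
    R.add_mem hp₂ (R.mul_mem ht hq₂), hq₂,
    ⟨u₁, v₁ - u₁ * t, hu₁, R.sub_mem hv₁ (R.mul_mem hu₁ ht), by linear_combination hb₁⟩,
    ⟨u₂, v₂ - u₂ * t, hu₂, R.sub_mem hv₂ (R.mul_mem hu₂ ht), by linear_combination hb₂⟩,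
    (divC_eq_coe.2 ⟨hq₁₀, by ring⟩).symm, (divC_eq_coe.2 ⟨hq₂₀, by ring⟩).symm, ?_⟩
  rw [← hdet]
  congr 1
  ring

end FareyGraph

section InducedFareyGraph

variable {d : ℕ} {S : Set ℂ}

/-- The subgraph of `E_d` induced on `S ⊆ ℂ`, as a graph on all of `ℂ` in which the points outside
`S` are isolated. -/
def inducedFareyGraph (d : ℕ) (S : Set ℂ) : SimpleGraph ℂ where
  Adj x y := x ∈ S ∧ y ∈ S ∧ FareyAdj d x y
  symm := ⟨fun _ _ h => ⟨h.2.1, h.1, h.2.2.symm⟩⟩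
  loopless := ⟨fun _ h => h.2.2.ne rfl⟩

@[simp]
lemma inducedFareyGraph_adj {x y : ℂ} :
    (inducedFareyGraph d S).Adj x y ↔ x ∈ S ∧ y ∈ S ∧ FareyAdj d x y :=
  Iff.rfl

lemma inducedFareyGraph.reachable_of_fareyAdj {x y : ℂ} (hx : x ∈ S) (hy : y ∈ S)
    (h : FareyAdj d x y) : (inducedFareyGraph d S).Reachable x y :=
  SimpleGraph.Adj.reachable (inducedFareyGraph_adj.2 ⟨hx, hy, h⟩)

lemma inducedFareyGraph.exists_isWalk_of_reachable {x y : ℂ}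
    (h : (inducedFareyGraph d S).Reachable x y) (hy : y ∈ S) :
    ∃ (n : ℕ) (f : ℕ → OnePoint ℂ), f 0 = x ∧ f n = y ∧ IsWalk d n f ∧
      ∀ k ≤ n, ∃ z ∈ S, f k = z := by
  obtain ⟨p⟩ := h
  refine ⟨p.length, fun k => p.getVert k, by simp, by simp,
    fun k hk => (inducedFareyGraph_adj.1 (p.adj_getVert_succ hk)).2.2,
    fun k hk => ⟨p.getVert k, ?_, rfl⟩⟩
  rcases hk.lt_or_eq with hk | rfl
  · exact (inducedFareyGraph_adj.1 (p.adj_getVert_succ hk)).1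
  · simpa using hy

lemma inducedFareyGraph.reachable_add_right (hS : ∀ z ∈ S, ∀ t ∈ ringInt d, z + t ∈ S)
    {t a b : ℂ} (ht : t ∈ ringInt d) (h : (inducedFareyGraph d S).Reachable a b) :
    (inducedFareyGraph d S).Reachable (a + t) (b + t) := by
  refine h.map (⟨(· + t), fun {x y} hxy => ?_⟩ : inducedFareyGraph d S →g inducedFareyGraph d S)
  obtain ⟨hx, hy, hxy⟩ := inducedFareyGraph_adj.1 hxy
  exact ⟨hS x hx t ht, hS y hy t ht, hxy.add_right ht⟩

lemma inducedFareyGraph.reachable_zero_of_forall_sub_mem (h0 : (0 : ℂ) ∈ S)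
    (hS : ∀ z ∈ S, ∀ t ∈ ringInt d, z + t ∈ S)
    (hω : (inducedFareyGraph d S).Reachable 0 (omegaD d))
    (hrep : ∀ z ∈ S, ∃ c, (inducedFareyGraph d S).Reachable 0 c ∧ z - c ∈ ringInt d)
    {z : ℂ} (hz : z ∈ S) : (inducedFareyGraph d S).Reachable 0 z := by
  set G := inducedFareyGraph d S
  set R := ringIntSubring d
  have h1 : G.Reachable 0 1 := reachable_of_fareyAdj h0 (by simpa using hS 0 h0 1 R.one_mem)
    (fareyAdj_coe_of R.zero_mem R.one_mem R.one_mem R.one_mem (coprimeIn_one_right _)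
      (coprimeIn_one_right _) one_ne_zero one_ne_zero (by ring) (by ring) (by ring))
  let A : AddSubgroup ℂ :=
    { carrier := {t | t ∈ ringInt d ∧ G.Reachable 0 t}
      add_mem' := fun {a b} ha hb => ⟨R.add_mem ha.1 hb.1,
        ha.2.trans (by simpa [add_comm] using reachable_add_right hS ha.1 hb.2)⟩
      zero_mem' := ⟨R.zero_mem, .rfl⟩
      neg_mem' := fun {a} ha => ⟨R.neg_mem ha.1,
        by simpa using (reachable_add_right hS (R.neg_mem ha.1) ha.2).symm⟩ }
  have hring : ∀ t ∈ ringInt d, G.Reachable 0 t := by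
    rintro _ ⟨a, b, rfl⟩
    have h1A : (1 : ℂ) ∈ A := ⟨R.one_mem, h1⟩
    have hωA : omegaD d ∈ A := ⟨omegaD_mem_ringInt, hω⟩
    simpa [zsmul_eq_mul] using (A.add_mem (A.zsmul_mem h1A a) (A.zsmul_mem hωA b)).2
  obtain ⟨c, hc, hzc⟩ := hrep z hz
  exact (hring _ hzc).trans (by simpa using reachable_add_right hS hzc hc)

end InducedFareyGraph

section Seeds

variable {d : ℕ} {w : ℂ}

lemma fareyAdj_zero_omegaD_div {n : ℂ} (hw : w ∈ ringInt d) (hωw : omegaD d * w = n)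
    (hn : n ≠ 0) : FareyAdj d ↑(0 : ℂ) ↑(omegaD d / n) :=
  fareyAdj_coe_of (ringIntSubring d).zero_mem (ringIntSubring d).one_mem
    (ringIntSubring d).one_mem hw (coprimeIn_one_right _) (coprimeIn_one_left _) one_ne_zero
    (right_ne_zero_of_mul (hωw ▸ hn)) (by ring) (by rw [div_mul_eq_mul_div, hωw, div_self hn])
    (by ring)

lemma fareyAdj_omegaD_div_two_omegaD (hw : w ∈ ringInt d) (hωw : omegaD d * w = 2) :
    FareyAdj d ↑(omegaD d / 2) (omegaD d) :=
  fareyAdj_coe_of (ringIntSubring d).one_mem hw omegaD_mem_ringInt (ringIntSubring d).one_mem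
    (coprimeIn_one_left _) (coprimeIn_one_right _) (right_ne_zero_of_mul (hωw ▸ two_ne_zero))
    one_ne_zero (by linear_combination -hωw / 2) (by ring) (by linear_combination -hωw)

lemma fareyAdj_omegaD_div_three_omegaD_div_two (hw : w ∈ ringInt d) (hωw : omegaD d * w = 3) :
    FareyAdj d ↑(omegaD d / 3) ↑(omegaD d / 2) :=
  fareyAdj_coe_of (ringIntSubring d).one_mem hw omegaD_mem_ringInt two_mem_ringInt
    (coprimeIn_one_left _) ⟨-w, 2, (ringIntSubring d).neg_mem hw, two_mem_ringInt,
      by linear_combination -hωw⟩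
    (right_ne_zero_of_mul (hωw ▸ three_ne_zero)) two_ne_zero (by linear_combination -hωw / 3)
    (by ring) (by linear_combination -hωw)

lemma fareyAdj_omegaD_div_two_two_mul_omegaD_div_three (hw : w ∈ ringInt d)
    (hωw : omegaD d * w = 3) : FareyAdj d ↑(omegaD d / 2) ↑(2 * omegaD d / 3) :=
  fareyAdj_coe_of omegaD_mem_ringInt two_mem_ringInt two_mem_ringInt hw
    ⟨-w, 2, (ringIntSubring d).neg_mem hw, two_mem_ringInt, by linear_combination -hωw⟩
    ⟨2, -omegaD d, two_mem_ringInt, (ringIntSubring d).neg_mem omegaD_mem_ringInt,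
      by linear_combination -hωw⟩
    two_ne_zero (right_ne_zero_of_mul (hωw ▸ three_ne_zero)) (by ring)
    (by linear_combination -2 * hωw / 3) (by linear_combination hωw)

lemma fareyAdj_two_mul_omegaD_div_three_omegaD (hw : w ∈ ringInt d) (hωw : omegaD d * w = 3) :
    FareyAdj d ↑(2 * omegaD d / 3) (omegaD d) :=
  fareyAdj_coe_of two_mem_ringInt hw omegaD_mem_ringInt (ringIntSubring d).one_mem
    ⟨2, -omegaD d, two_mem_ringInt, (ringIntSubring d).neg_mem omegaD_mem_ringInt,
      by linear_combination -hωw⟩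
    (coprimeIn_one_right _) (right_ne_zero_of_mul (hωw ▸ three_ne_zero)) one_ne_zero
    (by linear_combination -2 * hωw / 3) (by ring) (by linear_combination -hωw)

end Seeds

section Gset

variable {d : ℕ}

lemma Gset_of_ne_eleven (hd : d ≠ 11) :
    Gset d = {z | z ∈ ringInt d ∨ z - omegaD d / 2 ∈ ringInt d} :=
  if_neg hd

lemma Gset_eleven : Gset 11 = {z | z ∈ ringInt 11 ∨ z - omegaD 11 / 3 ∈ ringInt 11 ∨
    z - omegaD 11 / 2 ∈ ringInt 11 ∨ z - 2 * omegaD 11 / 3 ∈ ringInt 11} :=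
  if_pos rfl

lemma mem_Gset_of_mem_ringInt {z : ℂ} (hz : z ∈ ringInt d) : z ∈ Gset d := by
  unfold Gset
  split_ifs with hd
  · subst hd; exact Or.inl hz
  · exact Or.inl hz

lemma add_mem_Gset {z t : ℂ} (hz : z ∈ Gset d) (ht : t ∈ ringInt d) : z + t ∈ Gset d := by
  have hadd : z ∈ ringInt d → z + t ∈ ringInt d := ((ringIntSubring d).add_mem · ht)
  have hsub (c : ℂ) : z - c ∈ ringInt d → z + t - c ∈ ringInt d := fun h => by
    rw [add_sub_right_comm]; exact (ringIntSubring d).add_mem h ht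
  unfold Gset at hz ⊢
  split_ifs at hz ⊢ with hd
  · subst hd; exact hz.imp hadd (.imp (hsub _) (.imp (hsub _) (hsub _)))
  · exact hz.imp hadd (hsub _)

lemma reachable_zero_of_mem_Gset_of_omegaD_mul_eq_two (hd : d ≠ 11) {w : ℂ}
    (hw : w ∈ ringInt d) (hωw : omegaD d * w = 2) {z : ℂ} (hz : z ∈ Gset d) :
    (inducedFareyGraph d (Gset d)).Reachable 0 z := by
  have h0 : (0 : ℂ) ∈ ringInt d := (ringIntSubring d).zero_mem
  have hhalf : omegaD d / 2 ∈ Gset d := by simp [Gset_of_ne_eleven hd, h0]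
  have reach_half := inducedFareyGraph.reachable_of_fareyAdj (mem_Gset_of_mem_ringInt h0) hhalf
    (fareyAdj_zero_omegaD_div hw hωw two_ne_zero)
  have reach_ω := reach_half.trans <| inducedFareyGraph.reachable_of_fareyAdj hhalf
    (mem_Gset_of_mem_ringInt omegaD_mem_ringInt) (fareyAdj_omegaD_div_two_omegaD hw hωw)
  refine inducedFareyGraph.reachable_zero_of_forall_sub_mem (mem_Gset_of_mem_ringInt h0)
    (fun _ h _ ↦ add_mem_Gset h) reach_ω (fun z hz ↦ ?_) hz
  rw [Gset_of_ne_eleven hd] at hz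
  rcases hz with hz | hz
  · exact ⟨0, .rfl, by simpa using hz⟩
  · exact ⟨_, reach_half, hz⟩

lemma reachable_zero_of_mem_Gset_eleven {z : ℂ} (hz : z ∈ Gset 11) :
    (inducedFareyGraph 11 (Gset 11)).Reachable 0 z := by
  have hw : 1 - omegaD 11 ∈ ringInt 11 :=
    (ringIntSubring 11).sub_mem (ringIntSubring 11).one_mem omegaD_mem_ringInt
  have hωw : omegaD 11 * (1 - omegaD 11) = 3 := by
    linear_combination -omegaD_sq_of_eq_four_mul_add_three (d := 11) (m := 2) rfl
  have h0 : (0 : ℂ) ∈ ringInt 11 := (ringIntSubring 11).zero_mem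
  have hthird : omegaD 11 / 3 ∈ Gset 11 := by simp [Gset_eleven, h0]
  have hhalf : omegaD 11 / 2 ∈ Gset 11 := by simp [Gset_eleven, h0]
  have htwothirds : 2 * omegaD 11 / 3 ∈ Gset 11 := by simp [Gset_eleven, h0]
  have reach_third := inducedFareyGraph.reachable_of_fareyAdj (mem_Gset_of_mem_ringInt h0)
    hthird (fareyAdj_zero_omegaD_div hw hωw three_ne_zero)
  have reach_half := reach_third.trans <| inducedFareyGraph.reachable_of_fareyAdj hthird hhalf
    (fareyAdj_omegaD_div_three_omegaD_div_two hw hωw)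
  have reach_twothirds := reach_half.trans <| inducedFareyGraph.reachable_of_fareyAdj hhalf
    htwothirds (fareyAdj_omegaD_div_two_two_mul_omegaD_div_three hw hωw)
  have reach_ω := reach_twothirds.trans <| inducedFareyGraph.reachable_of_fareyAdj htwothirds
    (mem_Gset_of_mem_ringInt omegaD_mem_ringInt) (fareyAdj_two_mul_omegaD_div_three_omegaD hw hωw)
  refine inducedFareyGraph.reachable_zero_of_forall_sub_mem (mem_Gset_of_mem_ringInt h0)
    (fun _ h _ ↦ add_mem_Gset h) reach_ω (fun z hz ↦ ?_) hz
  rw [Gset_eleven] at hz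
  rcases hz with hz | hz | hz | hz
  · exact ⟨0, .rfl, by simpa using hz⟩
  · exact ⟨_, reach_third, hz⟩
  · exact ⟨_, reach_half, hz⟩
  · exact ⟨_, reach_twothirds, hz⟩

end Gset

/-- For `d ∈ {2,7,11}` the subgraph of the Farey graph `E_d`
induced on `G_d` is connected: any two elements of `G_d` are joined by a walk in
`E_d` all of whose vertices belong to `G_d`. -/
theorem Gset_subgraph_connected (d : ℕ) (hd : d ∈ ({2, 7, 11} : Set ℕ))
    (x y : ℂ) (hx : x ∈ Gset d) (hy : y ∈ Gset d) :
    ∃ (n : ℕ) (f : ℕ → OnePoint ℂ), f 0 = ((x : ℂ) : OnePoint ℂ) ∧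
      f n = ((y : ℂ) : OnePoint ℂ) ∧ IsWalk d n f ∧
      ∀ k ≤ n, ∃ z ∈ Gset d, f k = ((z : ℂ) : OnePoint ℂ) := by
  have reach_zero : ∀ z ∈ Gset d, (inducedFareyGraph d (Gset d)).Reachable 0 z := by
    intro z hz
    rcases hd with rfl | rfl | rfl
    · exact reachable_zero_of_mem_Gset_of_omegaD_mul_eq_two (by norm_num)
        ((ringIntSubring 2).neg_mem omegaD_mem_ringInt)
        (by linear_combination -omegaD_sq_of_mod_four_ne_three (d := 2) (by norm_num)) hz
    · exact reachable_zero_of_mem_Gset_of_omegaD_mul_eq_two (by norm_num)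
        ((ringIntSubring 7).sub_mem (ringIntSubring 7).one_mem omegaD_mem_ringInt)
        (by linear_combination -omegaD_sq_of_eq_four_mul_add_three (d := 7) (m := 1) rfl) hz
    · exact reachable_zero_of_mem_Gset_eleven hz
  exact inducedFareyGraph.exists_isWalk_of_reachable
    ((reach_zero x hx).symm.trans (reach_zero y hy)) hy
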